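/- Let q > 0 and, for 0 < a ≤ ρ, define λ(a, ρ) = ∫_1^{sinh(ρ)/sinh(a)} (v^{2q} − 1)^{−1/2} · sinh(a) · (1 + v² sinh(a)²)^{−1/2} dv. Fix ρ > 0 and assume either (i) q ≥ 1, or (ii) q < 1 and ρ ≤ M where M = arccosh(√(1/(1−q))). Then the function a ↦ λ(a, ρ) is twice differentiable on (0, ρ) and its second partial derivative in a satisfies ∂²λ/∂a²(a, ρ) < 0 for all a ∈ (0, ρ). -/

import Mathlib

open Real MeasureTheory Set Filter Topology intervalIntegral Metric

/-- The height at radius `ρ` of the profile curve of the r-catenoid with neck radius `a`. -/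
noncomputable def catLam (q a ρ : ℝ) : ℝ :=
  ∫ v in (1 : ℝ)..(Real.sinh ρ / Real.sinh a),
    (v ^ (2 * q) - 1) ^ (-(1 : ℝ) / 2) * Real.sinh a *
      (1 + v ^ 2 * Real.sinh a ^ 2) ^ (-(1 : ℝ) / 2)



noncomputable def sing (q v : ℝ) : ℝ := (v ^ (2 * q) - 1) ^ (-(1 : ℝ) / 2)

lemma one_lt_rpow_self {v p : ℝ} (hv : 1 < v) (hp : 0 < p) : 1 < v ^ p := by
  rw [Real.one_lt_rpow_iff_of_pos (by linarith)]
  exact Or.inl ⟨hv, hp⟩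

lemma sing_pos {q v : ℝ} (hq : 0 < q) (hv : 1 < v) : 0 < sing q v := by
  have : (1:ℝ) < v ^ (2*q) := one_lt_rpow_self hv (by linarith)
  exact Real.rpow_pos_of_pos (by linarith) _

lemma one_le_rpow_self {v p : ℝ} (hv : 1 ≤ v) (hp : 0 ≤ p) : 1 ≤ v ^ p := by
  have := Real.rpow_le_rpow (zero_le_one) hv hp
  simpa using this

lemma sing_nonneg {q v : ℝ} (hq : 0 < q) (hv : 1 ≤ v) : 0 ≤ sing q v :=
  Real.rpow_nonneg (sub_nonneg.2 (one_le_rpow_self hv (by linarith))) _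

lemma continuousAt_sing {q v : ℝ} (hq : 0 < q) (hv : 1 < v) : ContinuousAt (sing q) v := by
  have h1 : ContinuousAt (fun v : ℝ => v ^ (2*q) - 1) v :=
    (Real.continuousAt_rpow_const v (2*q) (Or.inl (by positivity))).sub continuousAt_const
  have h2 : (1:ℝ) < v ^ (2*q) := one_lt_rpow_self hv (by linarith)
  exact h1.rpow_const (Or.inl (ne_of_gt (sub_pos.2 h2)))

lemma continuousOn_sing {q : ℝ} (hq : 0 < q) : ContinuousOn (sing q) (Set.Ioi 1) :=
  fun v hv => (continuousAt_sing hq hv).continuousWithinAt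

lemma intervalIntegrable_sing {q r : ℝ} (hq : 0 < q) (hr : 1 ≤ r) :
    IntervalIntegrable (sing q) volume 1 r := by
  rcases eq_or_lt_of_le hr with h | h
  · exact h ▸ IntervalIntegrable.refl
  set p := 2 * q with hpdef
  have hp0 : 0 < p := by positivity
  have hrp : 0 < r ^ (p - 1) := Real.rpow_pos_of_pos (by linarith) _
  set m := p * min 1 (r ^ (p - 1)) with hmdef
  have hm0 : 0 < m := mul_pos hp0 (lt_min one_pos hrp)
  -- lower bound on [1, r]
  have hmono : MonotoneOn (fun v : ℝ => v ^ p - 1 - m * (v - 1)) (Set.Icc 1 r) := by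
    have hd : ∀ x ∈ Set.Ioo (1:ℝ) r, HasDerivAt (fun v : ℝ => v ^ p - 1 - m * (v - 1))
        (p * x ^ (p - 1) - m) x := by
      intro x hx
      have h1 : HasDerivAt (fun v : ℝ => v ^ p) (p * x ^ (p - 1)) x :=
        Real.hasDerivAt_rpow_const (Or.inl (by linarith [hx.1]))
      have h2 : HasDerivAt (fun v : ℝ => m * (v - 1)) m x := by
        simpa using ((hasDerivAt_id x).sub_const 1).const_mul m
      exact (h1.sub_const 1).sub h2
    have hcont : ContinuousOn (fun v : ℝ => v ^ p - 1 - m * (v - 1)) (Set.Icc 1 r) := by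
      apply ContinuousOn.sub
      · apply ContinuousOn.sub _ continuousOn_const
        exact fun x hx => (Real.continuousAt_rpow_const x p
          (Or.inl (by intro h0; rw [h0] at hx; exact absurd hx.1 (by norm_num)))).continuousWithinAt
      · exact (continuousOn_id.sub continuousOn_const).const_smul m
    have hint : interior (Set.Icc (1:ℝ) r) = Set.Ioo 1 r := interior_Icc
    apply monotoneOn_of_deriv_nonneg (convex_Icc 1 r) hcont
    · rw [hint]; exact fun x hx => (hd x hx).differentiableAt.differentiableWithinAt
    · rw [hint]; intro x hx
      rw [(hd x hx).deriv]
      have hxmin : min 1 (r ^ (p - 1)) ≤ x ^ (p - 1) := by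
        rcases le_total 1 p with hp1 | hp1
        · exact le_trans (min_le_left _ _) (one_le_rpow_self (le_of_lt hx.1) (by linarith))
        · refine le_trans (min_le_right _ _) ?_
          exact Real.rpow_le_rpow_of_nonpos (by linarith [hx.1]) (le_of_lt hx.2) (by linarith)
      have := mul_le_mul_of_nonneg_left hxmin (le_of_lt hp0)
      simp only [hmdef]; linarith
  have key : ∀ v ∈ Set.Icc (1:ℝ) r, m * (v - 1) ≤ v ^ p - 1 := by
    intro v hv
    have := hmono (Set.left_mem_Icc.2 hr) hv hv.1
    simpa [Real.one_rpow] using this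
  -- comparison function is integrable
  have hint : IntervalIntegrable (fun v : ℝ => m ^ (-(1:ℝ)/2) * (v - 1) ^ (-(1:ℝ)/2))
      volume 1 r := by
    have h0 : IntervalIntegrable (fun x : ℝ => x ^ (-(1:ℝ)/2)) volume 0 (r - 1) :=
      intervalIntegrable_rpow' (by norm_num)
    have h1 := (h0.comp_sub_right 1).const_mul (m ^ (-(1:ℝ)/2))
    norm_num at h1
    convert h1 using 2
    norm_num
  refine hint.mono_fun ?_ ?_
  · rw [uIoc_of_le hr]
    exact ((continuousOn_sing hq).mono (fun x hx => hx.1)).aestronglyMeasurable measurableSet_Ioc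
  · rw [uIoc_of_le hr, EventuallyLE, ae_restrict_iff' measurableSet_Ioc]
    refine Eventually.of_forall fun v hv => ?_
    have hv1 : (1:ℝ) < v := hv.1
    have hkey := key v ⟨le_of_lt hv1, hv.2⟩
    have hmv : 0 < m * (v - 1) := mul_pos hm0 (by linarith)
    have hle : sing q v ≤ (m * (v - 1)) ^ (-(1:ℝ)/2) :=
      Real.rpow_le_rpow_of_nonpos hmv hkey (by norm_num)
    have heq : (m * (v - 1)) ^ (-(1:ℝ)/2) = m ^ (-(1:ℝ)/2) * (v - 1) ^ (-(1:ℝ)/2) :=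
      Real.mul_rpow (le_of_lt hm0) (by linarith)
    have h1 : ‖sing q v‖ = sing q v := Real.norm_of_nonneg (sing_nonneg hq (le_of_lt hv1))
    have h2 : ‖m ^ (-(1:ℝ)/2) * (v - 1) ^ (-(1:ℝ)/2)‖ = m ^ (-(1:ℝ)/2) * (v - 1) ^ (-(1:ℝ)/2) :=
      Real.norm_of_nonneg (mul_nonneg (Real.rpow_nonneg (le_of_lt hm0) _)
        (Real.rpow_nonneg (by linarith) _))
    rw [h1, h2, ← heq]
    exact hle

lemma intervalIntegrable_sing_mul {q r : ℝ} (hq : 0 < q) (hr : 1 ≤ r) {f : ℝ → ℝ}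
    (hf : ContinuousOn f (Set.Icc 1 r)) :
    IntervalIntegrable (fun v => sing q v * f v) volume 1 r := by
  obtain ⟨M, hM⟩ := (isCompact_Icc).exists_bound_of_continuousOn hf
  set M' := max M 0 with hM'def
  have hbase : IntervalIntegrable (fun v => M' * sing q v) volume 1 r :=
    (intervalIntegrable_sing hq hr).const_mul M'
  refine hbase.mono_fun ?_ ?_
  · rw [uIoc_of_le hr]
    exact (((continuousOn_sing hq).mono (fun x hx => hx.1)).mul
      (hf.mono Set.Ioc_subset_Icc_self)).aestronglyMeasurable measurableSet_Ioc
  · rw [uIoc_of_le hr, EventuallyLE, ae_restrict_iff' measurableSet_Ioc]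
    refine Eventually.of_forall fun v hv => ?_
    have hs : 0 ≤ sing q v := sing_nonneg hq (le_of_lt hv.1)
    have hfv : ‖f v‖ ≤ M' := le_trans (hM v ⟨le_of_lt hv.1, hv.2⟩) (le_max_left _ _)
    have : ‖sing q v * f v‖ = sing q v * ‖f v‖ := by
      rw [norm_mul, Real.norm_of_nonneg hs]
    rw [this, Real.norm_of_nonneg (mul_nonneg (le_max_right _ _) hs)]
    calc sing q v * ‖f v‖ ≤ sing q v * M' := by
          exact mul_le_mul_of_nonneg_left hfv hs
      _ = M' * sing q v := mul_comm _ _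

lemma hasDerivAt_lamAux (q ρ : ℝ) (hq : 0 < q) (hρ : 0 < ρ)
    (ψ ψ' : ℝ → ℝ → ℝ)
    (hψc : Continuous fun p : ℝ × ℝ => ψ p.1 p.2)
    (hψ'c : Continuous fun p : ℝ × ℝ => ψ' p.1 p.2)
    (hψd : ∀ v x, HasDerivAt (fun y => ψ v y) (ψ' v x) x)
    {a : ℝ} (ha : a ∈ Set.Ioo 0 ρ) :
    HasDerivAt (fun x => ∫ v in (1:ℝ)..(Real.sinh ρ / Real.sinh x), sing q v * ψ v x)
      (sing q (Real.sinh ρ / Real.sinh a) * ψ (Real.sinh ρ / Real.sinh a) a *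
          (Real.sinh ρ * (-Real.cosh a / Real.sinh a ^ 2))
        + ∫ v in (1:ℝ)..(Real.sinh ρ / Real.sinh a), sing q v * ψ' v a) a := by
  obtain ⟨ha0, haρ⟩ := ha
  have hsa : 0 < Real.sinh a := Real.sinh_pos_iff.2 ha0
  set S := Real.sinh ρ with hSdef
  have hSpos : 0 < S := Real.sinh_pos_iff.2 hρ
  set r₀ := S / Real.sinh a with hr₀def
  have hr₀ : 1 < r₀ := (one_lt_div hsa).2 (Real.sinh_lt_sinh.2 haρ)
  set ε := (r₀ - 1) / 2 with hεdef
  have hε : 0 < ε := by simp only [hεdef]; linarith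
  have hIoi : Set.Icc (r₀ - ε) (r₀ + ε) ⊆ Set.Ioi 1 := by
    intro v hv
    simp only [Set.mem_Ioi]
    have := hv.1
    simp only [hεdef] at this ⊢
    linarith
  -- derivative of R x = S / sinh x
  have hRd : ∀ x : ℝ, 0 < x →
      HasDerivAt (fun y => S / Real.sinh y) (S * (-Real.cosh x / Real.sinh x ^ 2)) x := by
    intro x hx
    have h := ((Real.hasDerivAt_sinh x).inv (ne_of_gt (Real.sinh_pos_iff.2 hx))).const_mul S
    simpa [div_eq_mul_inv] using h
  -- neighborhood control
  have hnhd : ∀ᶠ x in 𝓝 a, x ∈ Set.Ioo 0 ρ ∧ |S / Real.sinh x - r₀| < ε := by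
    have h1 : ∀ᶠ x in 𝓝 a, x ∈ Set.Ioo 0 ρ := isOpen_Ioo.eventually_mem ⟨ha0, haρ⟩
    have hacont : ContinuousAt (fun x => S / Real.sinh x) a :=
      continuousAt_const.div (Real.continuous_sinh.continuousAt) (ne_of_gt hsa)
    have h2 : ∀ᶠ x in 𝓝 a, (S / Real.sinh x) ∈ Metric.ball (S / Real.sinh a) ε :=
      hacont (Metric.ball_mem_nhds (S / Real.sinh a) hε)
    refine h1.and (h2.mono fun x hx => ?_)
    simpa [Metric.mem_ball, Real.dist_eq, hr₀def] using hx
  obtain ⟨δ₁, hδ₁, hδball⟩ := Metric.eventually_nhds_iff.1 hnhd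
  set δ := δ₁ / 2 with hδdef
  have hδ : 0 < δ := by positivity
  set J := Set.Icc (a - δ) (a + δ) with hJdef
  have hJsub : ∀ x ∈ J, x ∈ Set.Ioo 0 ρ ∧ |S / Real.sinh x - r₀| < ε := by
    intro x hx
    apply hδball
    rw [Real.dist_eq]
    have h1 : |x - a| ≤ δ := abs_le.2 ⟨by linarith [hx.1], by linarith [hx.2]⟩
    have h2 : δ < δ₁ := by rw [hδdef]; linarith
    linarith
  have haJ : a ∈ J := by
    constructor <;> [linarith; linarith]
  -- compact bounds
  obtain ⟨M₁, hM₁⟩ := ((isCompact_Icc (a := r₀ - ε) (b := r₀ + ε)).prod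
    (isCompact_Icc (a := a - δ) (b := a + δ))).exists_bound_of_continuousOn hψ'c.continuousOn
  obtain ⟨M₀, hM₀⟩ := ((isCompact_Icc (a := (1:ℝ)) (b := r₀)).prod
    (isCompact_Icc (a := a - δ) (b := a + δ))).exists_bound_of_continuousOn hψ'c.continuousOn
  obtain ⟨Ms, hMs⟩ := (isCompact_Icc (a := r₀ - ε) (b := r₀ + ε)).exists_bound_of_continuousOn
    ((continuousOn_sing hq).mono hIoi)
  obtain ⟨LR, hLR⟩ := (isCompact_Icc (a := a - δ) (b := a + δ)).exists_bound_of_continuousOn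
    (f := fun x => S * (-Real.cosh x / Real.sinh x ^ 2)) (by
      apply ContinuousOn.mul continuousOn_const
      apply ContinuousOn.div (Real.continuous_cosh.continuousOn.neg)
        ((Real.continuous_sinh.pow 2).continuousOn)
      intro x hx
      have hx0 : 0 < x := (hJsub x hx).1.1
      have := Real.sinh_pos_iff.2 hx0
      exact pow_ne_zero 2 (ne_of_gt this))
  set M₁' := max M₁ 0 with hM₁'def
  set M₀' := max M₀ 0 with hM₀'def
  set Ms' := max Ms 0 with hMs'def
  set LR' := max LR 0 with hLR'def
  -- Lipschitz bounds via MVT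
  have hψlip : ∀ v ∈ Set.Icc (r₀ - ε) (r₀ + ε), ∀ x ∈ J, |ψ v x - ψ v a| ≤ M₁' * |x - a| := by
    intro v hv x hx
    have := (convex_Icc (a - δ) (a + δ)).norm_image_sub_le_of_norm_hasDerivWithin_le
      (f := fun y => ψ v y) (f' := fun y => ψ' v y) (C := M₁')
      (fun y hy => (hψd v y).hasDerivWithinAt)
      (fun y hy => le_trans (hM₁ (v, y) ⟨hv, hy⟩) (le_max_left M₁ 0)) haJ hx
    simpa [Real.norm_eq_abs] using this
  have hRlip : ∀ x ∈ J, |S / Real.sinh x - r₀| ≤ LR' * |x - a| := by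
    intro x hx
    have := (convex_Icc (a - δ) (a + δ)).norm_image_sub_le_of_norm_hasDerivWithin_le
      (f := fun y => S / Real.sinh y) (f' := fun y => S * (-Real.cosh y / Real.sinh y ^ 2))
      (C := LR')
      (fun y hy => (hRd y (hJsub y hy).1.1).hasDerivWithinAt)
      (fun y hy => le_trans (hLR y hy) (le_max_left LR 0)) haJ hx
    simpa [Real.norm_eq_abs, hr₀def] using this
  -- Part A : fixed-endpoint parametric integral
  have hA : HasDerivAt (fun x => ∫ v in (1:ℝ)..r₀, sing q v * ψ v x)
      (∫ v in (1:ℝ)..r₀, sing q v * ψ' v a) a := by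
    have key := intervalIntegral.hasDerivAt_integral_of_dominated_loc_of_deriv_le
      (F := fun x v => sing q v * ψ v x) (F' := fun x v => sing q v * ψ' v x)
      (x₀ := a) (s := Metric.ball a δ) (a := (1:ℝ)) (b := r₀) (μ := volume)
      (bound := fun v => M₀' * sing q v) (Metric.ball_mem_nhds a hδ) ?_ ?_ ?_ ?_ ?_ ?_
    · exact key.2
    · refine Eventually.of_forall fun x => ?_
      rw [uIoc_of_le (le_of_lt hr₀)]
      have hcψ : Continuous fun v => ψ v x := hψc.comp (continuous_id.prodMk continuous_const)
      exact (((continuousOn_sing hq).mono (fun y hy => hy.1)).mul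
        hcψ.continuousOn).aestronglyMeasurable measurableSet_Ioc
    · exact intervalIntegrable_sing_mul hq (le_of_lt hr₀)
        (hψc.comp (continuous_id.prodMk continuous_const)).continuousOn
    · rw [uIoc_of_le (le_of_lt hr₀)]
      have hcψ : Continuous fun v => ψ' v a := hψ'c.comp (continuous_id.prodMk continuous_const)
      exact (((continuousOn_sing hq).mono (fun y hy => hy.1)).mul
        hcψ.continuousOn).aestronglyMeasurable measurableSet_Ioc
    · refine Eventually.of_forall fun v hv x hx => ?_
      rw [Set.uIoc_of_le (le_of_lt hr₀)] at hv
      have hv1 : (1:ℝ) < v := hv.1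
      have hsing : 0 ≤ sing q v := sing_nonneg hq (le_of_lt hv1)
      have hxJ : x ∈ J := by
        have := Metric.mem_ball.1 hx
        rw [Real.dist_eq] at this
        constructor <;> [linarith [abs_lt.1 this |>.1]; linarith [abs_lt.1 this |>.2]]
      have hbd : ‖ψ' v x‖ ≤ M₀' :=
        le_trans (hM₀ (v, x) ⟨⟨le_of_lt hv1, hv.2⟩, hxJ⟩) (le_max_left _ _)
      rw [norm_mul, Real.norm_of_nonneg hsing]
      calc sing q v * ‖ψ' v x‖ ≤ sing q v * M₀' := mul_le_mul_of_nonneg_left hbd hsing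
        _ = M₀' * sing q v := mul_comm _ _
    · exact (intervalIntegrable_sing hq (le_of_lt hr₀)).const_mul M₀'
    · refine Eventually.of_forall fun v hv x hx => ?_
      exact (hψd v x).const_mul (sing q v)
  -- continuity of the frozen integrand
  have hfcont : ContinuousOn (fun v => sing q v * ψ v a) (Set.Ioi 1) :=
    (continuousOn_sing hq).mul (hψc.comp (continuous_id.prodMk continuous_const)).continuousOn
  have hr₀lb : 1 < r₀ - ε := by simp only [hεdef]; linarith
  -- Part B1 : Fundamental theorem of calculus term
  have hG : HasDerivAt (fun y => ∫ v in r₀..y, sing q v * ψ v a) (sing q r₀ * ψ r₀ a) r₀ :=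
    intervalIntegral.integral_hasDerivAt_right IntervalIntegrable.refl
      (hfcont.stronglyMeasurableAtFilter isOpen_Ioi r₀ hr₀)
      (hfcont.continuousAt (Ioi_mem_nhds hr₀))
  have hGR : HasDerivAt (fun x => ∫ v in r₀..(S / Real.sinh x), sing q v * ψ v a)
      (sing q r₀ * ψ r₀ a * (S * (-Real.cosh a / Real.sinh a ^ 2))) a :=
    by
      have hG' : HasDerivAt (fun y => ∫ v in r₀..y, sing q v * ψ v a) (sing q r₀ * ψ r₀ a)
          (S / Real.sinh a) := hG
      exact HasDerivAt.comp a hG' (hRd a ha0)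
  -- Part B2 : the error term has derivative zero
  have herr : HasDerivAt
      (fun x => ∫ v in r₀..(S / Real.sinh x), sing q v * (ψ v x - ψ v a)) 0 a := by
    rw [hasDerivAt_iff_isLittleO]
    have hKnn : 0 ≤ Ms' * M₁' * LR' :=
      mul_nonneg (mul_nonneg (le_max_right _ _) (le_max_right _ _)) (le_max_right _ _)
    refine Asymptotics.isLittleO_iff.2 fun c hc => ?_
    rw [Metric.eventually_nhds_iff]
    refine ⟨min δ (c / (Ms' * M₁' * LR' + 1)), lt_min hδ (by positivity), fun x hdist => ?_⟩
    rw [Real.dist_eq] at hdist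
    have hxa1 : |x - a| < δ := lt_of_lt_of_le hdist (min_le_left _ _)
    have hxa2 : |x - a| ≤ c / (Ms' * M₁' * LR' + 1) := le_of_lt
      (lt_of_lt_of_le hdist (min_le_right _ _))
    have hxJ : x ∈ J := by
      have := abs_lt.1 hxa1
      constructor <;> [linarith [this.1]; linarith [this.2]]
    have hxnear : |S / Real.sinh x - r₀| < ε := (hJsub x hxJ).2
    have hiota : Set.uIoc r₀ (S / Real.sinh x) ⊆ Set.Icc (r₀ - ε) (r₀ + ε) := by
      intro v hv
      have h1 := hv.1
      have h2 := hv.2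
      have hd := abs_lt.1 hxnear
      rcases le_total r₀ (S / Real.sinh x) with h | h
      · rw [Set.uIoc_of_le h] at hv
        exact ⟨by linarith [hv.1], by linarith [hv.2, hd.2]⟩
      · rw [Set.uIoc_of_ge h] at hv
        exact ⟨by linarith [hv.1, hd.1], by linarith [hv.2]⟩
    have hbd : ∀ v ∈ Set.uIoc r₀ (S / Real.sinh x),
        ‖sing q v * (ψ v x - ψ v a)‖ ≤ Ms' * (M₁' * |x - a|) := by
      intro v hv
      have hvI := hiota hv
      rw [norm_mul]
      have h1 : ‖sing q v‖ ≤ Ms' := le_trans (hMs v hvI) (le_max_left _ _)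
      have h2 : ‖ψ v x - ψ v a‖ ≤ M₁' * |x - a| := by
        rw [Real.norm_eq_abs]; exact hψlip v hvI x hxJ
      exact mul_le_mul h1 h2 (norm_nonneg _) (le_trans (norm_nonneg _) h1)
    have hest := intervalIntegral.norm_integral_le_of_norm_le_const hbd
    have hRest : |S / Real.sinh x - r₀| ≤ LR' * |x - a| := hRlip x hxJ
    simp only [intervalIntegral.integral_same, sub_zero, smul_zero, sub_zero]
    have hchain : ‖∫ v in r₀..(S / Real.sinh x), sing q v * (ψ v x - ψ v a)‖
        ≤ Ms' * M₁' * LR' * |x - a| * |x - a| := by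
      calc ‖∫ v in r₀..(S / Real.sinh x), sing q v * (ψ v x - ψ v a)‖
          ≤ Ms' * (M₁' * |x - a|) * |S / Real.sinh x - r₀| := hest
        _ ≤ Ms' * (M₁' * |x - a|) * (LR' * |x - a|) := by
            apply mul_le_mul_of_nonneg_left hRest
            positivity
        _ = Ms' * M₁' * LR' * |x - a| * |x - a| := by ring
    have hfin : Ms' * M₁' * LR' * |x - a| * |x - a| ≤ c * |x - a| := by
      have h1 : Ms' * M₁' * LR' * |x - a| ≤ c := by
        have h2 : Ms' * M₁' * LR' * |x - a| ≤ Ms' * M₁' * LR' * (c / (Ms' * M₁' * LR' + 1)) :=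
          mul_le_mul_of_nonneg_left hxa2 hKnn
        have h3 : Ms' * M₁' * LR' * (c / (Ms' * M₁' * LR' + 1)) ≤ c := by
          rw [mul_div_assoc', div_le_iff₀ (by positivity)]
          nlinarith
        linarith
      exact mul_le_mul_of_nonneg_right h1 (abs_nonneg _)
    have := le_trans hchain hfin
    simpa [Real.norm_eq_abs] using this
  -- splitting the integral near `a`
  have hsplit : (fun x => ∫ v in (1:ℝ)..(S / Real.sinh x), sing q v * ψ v x)
      =ᶠ[𝓝 a] fun x => (∫ v in (1:ℝ)..r₀, sing q v * ψ v x)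
        + ((∫ v in r₀..(S / Real.sinh x), sing q v * ψ v a)
           + (∫ v in r₀..(S / Real.sinh x), sing q v * (ψ v x - ψ v a))) := by
    refine Metric.eventually_nhds_iff.2 ⟨δ₁, hδ₁, fun x hdist => ?_⟩
    obtain ⟨hxIoo, hxnear⟩ := hδball hdist
    have hcψx : Continuous fun v => ψ v x := hψc.comp (continuous_id.prodMk continuous_const)
    have hIsub : Set.uIcc r₀ (S / Real.sinh x) ⊆ Set.Ioi 1 := by
      refine subset_trans ?_ hIoi
      have hd := abs_lt.1 hxnear
      intro v hv
      rcases Set.mem_uIcc.1 hv with h | h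
      · exact ⟨by linarith [h.1], by linarith [h.2, hd.2]⟩
      · exact ⟨by linarith [h.1, hd.1], by linarith [h.2]⟩
    have h2 : IntervalIntegrable (fun v => sing q v * ψ v x) volume 1 r₀ :=
      intervalIntegrable_sing_mul hq (le_of_lt hr₀) hcψx.continuousOn
    have hcont3 : ContinuousOn (fun v => sing q v * ψ v x) (Set.Ioi 1) :=
      (continuousOn_sing hq).mul hcψx.continuousOn
    have h3 : IntervalIntegrable (fun v => sing q v * ψ v x) volume r₀ (S / Real.sinh x) :=
      (hcont3.mono hIsub).intervalIntegrable
    have h3a : IntervalIntegrable (fun v => sing q v * ψ v a) volume r₀ (S / Real.sinh x) :=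
      (hfcont.mono hIsub).intervalIntegrable
    have h3b : IntervalIntegrable (fun v => sing q v * (ψ v x - ψ v a))
        volume r₀ (S / Real.sinh x) := by
      have : ContinuousOn (fun v => sing q v * (ψ v x - ψ v a)) (Set.Ioi 1) :=
        (continuousOn_sing hq).mul (hcψx.continuousOn.sub
          (hψc.comp (continuous_id.prodMk continuous_const)).continuousOn)
      exact (this.mono hIsub).intervalIntegrable
    dsimp only
    rw [← intervalIntegral.integral_add_adjacent_intervals h2 h3]
    congr 1
    have heq : (fun v => sing q v * ψ v x)
        = fun v => sing q v * ψ v a + sing q v * (ψ v x - ψ v a) := by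
      funext v; ring
    rw [heq, intervalIntegral.integral_add h3a h3b]
  -- assemble
  have htot := hA.add (hGR.add herr)
  have hfinal := htot.congr_of_eventuallyEq hsplit
  have hval : (∫ v in (1:ℝ)..r₀, sing q v * ψ' v a)
      + (sing q r₀ * ψ r₀ a * (S * (-Real.cosh a / Real.sinh a ^ 2)) + 0)
      = sing q r₀ * ψ r₀ a * (S * (-Real.cosh a / Real.sinh a ^ 2))
        + ∫ v in (1:ℝ)..r₀, sing q v * ψ' v a := by ring
  rw [hval] at hfinal
  exact hfinal


noncomputable def psi1 (v x : ℝ) : ℝ :=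
  Real.sinh x * (1 + v ^ 2 * Real.sinh x ^ 2) ^ (-(1 : ℝ) / 2)

noncomputable def psi2 (v x : ℝ) : ℝ :=
  Real.cosh x * (1 + v ^ 2 * Real.sinh x ^ 2) ^ (-(3 : ℝ) / 2)

noncomputable def psi3 (v x : ℝ) : ℝ :=
  Real.sinh x * (1 + v ^ 2 * Real.sinh x ^ 2) ^ (-(5 : ℝ) / 2) *
    ((1 + v ^ 2 * Real.sinh x ^ 2) - 3 * v ^ 2 * Real.cosh x ^ 2)

lemma B_pos (v x : ℝ) : 0 < 1 + v ^ 2 * Real.sinh x ^ 2 := by positivity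

lemma continuous_B : Continuous fun p : ℝ × ℝ => 1 + p.1 ^ 2 * Real.sinh p.2 ^ 2 :=
  continuous_const.add ((continuous_fst.pow 2).mul
    ((Real.continuous_sinh.comp continuous_snd).pow 2))

lemma continuous_psi1 : Continuous fun p : ℝ × ℝ => psi1 p.1 p.2 :=
  (Real.continuous_sinh.comp continuous_snd).mul
    (continuous_B.rpow_const fun p => Or.inl (ne_of_gt (B_pos _ _)))

lemma continuous_psi2 : Continuous fun p : ℝ × ℝ => psi2 p.1 p.2 :=
  (Real.continuous_cosh.comp continuous_snd).mul
    (continuous_B.rpow_const fun p => Or.inl (ne_of_gt (B_pos _ _)))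

lemma continuous_psi3 : Continuous fun p : ℝ × ℝ => psi3 p.1 p.2 :=
  ((Real.continuous_sinh.comp continuous_snd).mul
    (continuous_B.rpow_const fun p => Or.inl (ne_of_gt (B_pos _ _)))).mul
    (continuous_B.sub (((continuous_const.mul (continuous_fst.pow 2)).mul
      ((Real.continuous_cosh.comp continuous_snd).pow 2))))

lemma hasDerivAt_B (v x : ℝ) :
    HasDerivAt (fun y => 1 + v ^ 2 * Real.sinh y ^ 2)
      (v ^ 2 * (2 * Real.sinh x * Real.cosh x)) x := by
  have h := (((Real.hasDerivAt_sinh x).pow 2).const_mul (v ^ 2)).const_add 1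
  simpa [pow_one] using h

lemma hasDerivAt_psi1 (v x : ℝ) : HasDerivAt (fun y => psi1 v y) (psi2 v x) x := by
  have hB := hasDerivAt_B v x
  have hBpos := B_pos v x
  have hr := hB.rpow_const (p := -(1 : ℝ)/2) (Or.inl (ne_of_gt hBpos))
  have h := (Real.hasDerivAt_sinh x).mul hr
  have hexp : (1 + v ^ 2 * Real.sinh x ^ 2) ^ (-(1:ℝ)/2 - 1)
      = (1 + v ^ 2 * Real.sinh x ^ 2) ^ (-(3:ℝ)/2) := by norm_num
  have hBB : (1 + v ^ 2 * Real.sinh x ^ 2) ^ (-(1:ℝ)/2)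
      = (1 + v ^ 2 * Real.sinh x ^ 2) * (1 + v ^ 2 * Real.sinh x ^ 2) ^ (-(3:ℝ)/2) := by
    have he : (-(1:ℝ)/2) = 1 + (-(3:ℝ)/2) := by norm_num
    rw [he, Real.rpow_add hBpos, Real.rpow_one]
  refine HasDerivAt.congr_deriv h ?_
  unfold psi2
  rw [hexp, hBB]
  ring

lemma hasDerivAt_psi2 (v x : ℝ) : HasDerivAt (fun y => psi2 v y) (psi3 v x) x := by
  have hB := hasDerivAt_B v x
  have hBpos := B_pos v x
  have hr := hB.rpow_const (p := -(3 : ℝ)/2) (Or.inl (ne_of_gt hBpos))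
  have h := (Real.hasDerivAt_cosh x).mul hr
  have hexp : (1 + v ^ 2 * Real.sinh x ^ 2) ^ (-(3:ℝ)/2 - 1)
      = (1 + v ^ 2 * Real.sinh x ^ 2) ^ (-(5:ℝ)/2) := by norm_num
  have hBB : (1 + v ^ 2 * Real.sinh x ^ 2) ^ (-(3:ℝ)/2)
      = (1 + v ^ 2 * Real.sinh x ^ 2) * (1 + v ^ 2 * Real.sinh x ^ 2) ^ (-(5:ℝ)/2) := by
    have he : (-(3:ℝ)/2) = 1 + (-(5:ℝ)/2) := by norm_num
    rw [he, Real.rpow_add hBpos, Real.rpow_one]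
  refine HasDerivAt.congr_deriv h ?_
  unfold psi3
  rw [hexp, hBB]
  have hc2 : Real.cosh x ^ 2 = Real.sinh x ^ 2 + 1 := Real.cosh_sq x
  ring

set_option maxHeartbeats 2000000 in
/-- Lemma 2.2 of the paper: For fixed `ρ > 0`, if either `q ≥ 1`, or
`q < 1` and `ρ ≤ M` where `M = arccosh(√(1/(1-q)))` (characterized by `M ≥ 0` and
`cosh M = √(1/(1-q))`), then `a ↦ λ(a, ρ)` is twice differentiable on `(0, ρ)` with
`∂²λ/∂a² < 0` there. -/
theorem stmt_14 (q ρ : ℝ) (hq : 0 < q) (hρ : 0 < ρ)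
    (hcase : 1 ≤ q ∨
      (q < 1 ∧ ∃ M : ℝ, 0 ≤ M ∧ Real.cosh M = Real.sqrt (1 / (1 - q)) ∧ ρ ≤ M)) :
    ∀ a ∈ Set.Ioo (0 : ℝ) ρ,
      DifferentiableAt ℝ (fun x => catLam q x ρ) a ∧
      DifferentiableAt ℝ (deriv (fun x => catLam q x ρ)) a ∧
      deriv (deriv (fun x => catLam q x ρ)) a < 0 := by
  have hC0 : 0 < Real.cosh ρ := Real.cosh_pos ρ
  have hS0 : 0 < Real.sinh ρ := Real.sinh_pos_iff.2 hρ
  have hCsq : Real.cosh ρ ^ 2 = Real.sinh ρ ^ 2 + 1 := Real.cosh_sq ρ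
  -- the hypothesis amounts to tanh² ρ ≤ q
  have hT2q : Real.sinh ρ ^ 2 ≤ q * Real.cosh ρ ^ 2 := by
    rcases hcase with h1 | ⟨h1, M, hM0, hMcosh, hρM⟩
    · nlinarith
    · have h2 : Real.cosh ρ ≤ Real.cosh M :=
        Real.cosh_le_cosh.2 (by rw [abs_of_nonneg hρ.le, abs_of_nonneg hM0]; exact hρM)
      have h3 : Real.cosh M ^ 2 = 1 / (1 - q) := by
        rw [hMcosh, Real.sq_sqrt (div_nonneg zero_le_one (by linarith))]
      have h4 : Real.cosh ρ ^ 2 ≤ 1 / (1 - q) := by nlinarith [Real.cosh_pos M]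
      have h5 : (1 - q) * Real.cosh ρ ^ 2 ≤ 1 := by
        have h6 := mul_le_mul_of_nonneg_left h4 (by linarith : (0:ℝ) ≤ 1 - q)
        rw [mul_one_div, div_self (by linarith : (1:ℝ) - q ≠ 0)] at h6
        exact h6
      nlinarith
  intro a ha
  obtain ⟨ha0, haρ⟩ := ha
  have hs0 : 0 < Real.sinh a := Real.sinh_pos_iff.2 ha0
  have hsa2 : Real.sinh a ≠ 0 := ne_of_gt hs0
  have hc1 : 1 ≤ Real.cosh a := Real.one_le_cosh a
  have hcsqa : Real.cosh a ^ 2 = Real.sinh a ^ 2 + 1 := Real.cosh_sq a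
  have hr₀ : 1 < Real.sinh ρ / Real.sinh a := (one_lt_div hs0).2 (Real.sinh_lt_sinh.2 haρ)
  have hr₀0 : 0 < Real.sinh ρ / Real.sinh a := lt_trans one_pos hr₀
  have hP1 : 1 < (Real.sinh ρ / Real.sinh a) ^ (2 * q) := one_lt_rpow_self hr₀ (by linarith)
  have hD0 : 0 < (Real.sinh ρ / Real.sinh a) ^ (2 * q) - 1 := by linarith
  -- identification with `sing`/`psi1`
  have hfun : (fun x => catLam q x ρ)
      = fun x => ∫ v in (1:ℝ)..(Real.sinh ρ / Real.sinh x), sing q v * psi1 v x := by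
    funext x
    unfold catLam sing psi1
    simp only [mul_assoc]
  -- first derivative formula
  have hD1 : ∀ b ∈ Set.Ioo 0 ρ, HasDerivAt (fun x => catLam q x ρ)
      (sing q (Real.sinh ρ / Real.sinh b) * psi1 (Real.sinh ρ / Real.sinh b) b *
          (Real.sinh ρ * (-Real.cosh b / Real.sinh b ^ 2))
        + ∫ v in (1:ℝ)..(Real.sinh ρ / Real.sinh b), sing q v * psi2 v b) b := by
    intro b hb
    rw [hfun]
    exact hasDerivAt_lamAux q ρ hq hρ psi1 psi2 continuous_psi1 continuous_psi2
      hasDerivAt_psi1 hb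
  -- simplified first-derivative function
  have hCpow : ((Real.cosh ρ) ^ 2 : ℝ) ^ (-(1:ℝ)/2) = (Real.cosh ρ)⁻¹ := by
    rw [← Real.rpow_natCast (Real.cosh ρ) 2, ← Real.rpow_mul hC0.le]
    norm_num [Real.rpow_neg_one]
  have hCpow3 : ((Real.cosh ρ) ^ 2 : ℝ) ^ (-(3:ℝ)/2) = ((Real.cosh ρ) ^ 3)⁻¹ := by
    rw [show (-(3:ℝ)/2) = -((3:ℝ)/2) by norm_num, Real.rpow_neg (by positivity),
      ← Real.rpow_natCast (Real.cosh ρ) 2, ← Real.rpow_mul hC0.le]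
    norm_num
  have hBval : ∀ x : ℝ, Real.sinh x ≠ 0 →
      1 + (Real.sinh ρ / Real.sinh x) ^ 2 * Real.sinh x ^ 2 = Real.cosh ρ ^ 2 := by
    intro x hx
    field_simp
    linarith [hCsq]
  have hlamEq : ∀ b ∈ Set.Ioo (0:ℝ) ρ,
      (sing q (Real.sinh ρ / Real.sinh b) * psi1 (Real.sinh ρ / Real.sinh b) b *
          (Real.sinh ρ * (-Real.cosh b / Real.sinh b ^ 2))
        + ∫ v in (1:ℝ)..(Real.sinh ρ / Real.sinh b), sing q v * psi2 v b)
      = (-(Real.sinh ρ / Real.cosh ρ * (Real.cosh b / Real.sinh b *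
            ((Real.sinh ρ / Real.sinh b) ^ (2 * q) - 1) ^ (-(1:ℝ)/2)))
        + ∫ v in (1:ℝ)..(Real.sinh ρ / Real.sinh b), sing q v * psi2 v b) := by
    intro b hb
    have hsb : 0 < Real.sinh b := Real.sinh_pos_iff.2 hb.1
    simp only [psi1, sing]
    rw [hBval b (ne_of_gt hsb), hCpow]
    congr 1
    field_simp
  -- derivative of lamE at a
  have hR : HasDerivAt (fun x => Real.sinh ρ / Real.sinh x)
      (Real.sinh ρ * (-Real.cosh a / Real.sinh a ^ 2)) a := by
    have h := ((Real.hasDerivAt_sinh a).inv hsa2).const_mul (Real.sinh ρ)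
    simpa [div_eq_mul_inv] using h
  have hPd := hR.rpow_const (p := 2 * q) (Or.inl (ne_of_gt hr₀0))
  have hgd := (hPd.sub_const 1).rpow_const (p := -(1:ℝ)/2) (Or.inl (ne_of_gt hD0))
  have hcoth : HasDerivAt (fun x => Real.cosh x / Real.sinh x)
      ((Real.sinh a * Real.sinh a - Real.cosh a * Real.cosh a) / Real.sinh a ^ 2) a :=
    (Real.hasDerivAt_cosh a).div (Real.hasDerivAt_sinh a) hsa2
  have hE := ((hcoth.mul hgd).const_mul (Real.sinh ρ / Real.cosh ρ)).neg
  have hI := hasDerivAt_lamAux q ρ hq hρ psi2 psi3 continuous_psi2 continuous_psi3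
    hasDerivAt_psi2 (⟨ha0, haρ⟩ : a ∈ Set.Ioo 0 ρ)
  have hElam := hE.add hI
  -- transfer through deriv
  have hmem : Set.Ioo (0:ℝ) ρ ∈ 𝓝 a := isOpen_Ioo.mem_nhds ⟨ha0, haρ⟩
  have hev : deriv (fun x => catLam q x ρ) =ᶠ[𝓝 a] (fun x =>
      -(Real.sinh ρ / Real.cosh ρ * (Real.cosh x / Real.sinh x *
          ((Real.sinh ρ / Real.sinh x) ^ (2 * q) - 1) ^ (-(1:ℝ)/2)))
      + ∫ v in (1:ℝ)..(Real.sinh ρ / Real.sinh x), sing q v * psi2 v x) :=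
    eventually_of_mem hmem fun x hx => ((hD1 x hx).deriv).trans (hlamEq x hx)
  have hD2 := hElam.congr_of_eventuallyEq hev
  refine ⟨(hD1 a ⟨ha0, haρ⟩).differentiableAt, hD2.differentiableAt, ?_⟩
  rw [hD2.deriv]
  -- abbreviations
  have hP0 : 0 < (Real.sinh ρ / Real.sinh a) ^ (2 * q) := lt_trans one_pos hP1
  have hd0 : 0 < ((Real.sinh ρ / Real.sinh a) ^ (2 * q) - 1) ^ (-(1:ℝ)/2) :=
    Real.rpow_pos_of_pos hD0 _
  have hc2 : 1 ≤ Real.cosh a ^ 2 := by nlinarith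
  -- the integral term is negative
  have hIval : (∫ v in (1:ℝ)..(Real.sinh ρ / Real.sinh a), sing q v * psi3 v a) < 0 := by
    have hcont : ContinuousOn (fun v => psi3 v a)
        (Set.Icc 1 (Real.sinh ρ / Real.sinh a)) :=
      (continuous_psi3.comp (continuous_id.prodMk continuous_const)).continuousOn
    have hInt := intervalIntegrable_sing_mul hq hr₀.le hcont
    have hpos : ∀ v ∈ Set.Ioo (1:ℝ) (Real.sinh ρ / Real.sinh a),
        0 < -(sing q v * psi3 v a) := by
      intro v hv
      have h1 : 0 < sing q v := sing_pos hq hv.1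
      have hv2 : 1 < v ^ 2 := by nlinarith [hv.1]
      have hBp := B_pos v a
      have hrp : 0 < (1 + v ^ 2 * Real.sinh a ^ 2) ^ (-(5:ℝ)/2) :=
        Real.rpow_pos_of_pos hBp _
      have h2 : psi3 v a < 0 := by
        unfold psi3
        have hbr2 : (1 + v ^ 2 * Real.sinh a ^ 2) - 3 * v ^ 2 * Real.cosh a ^ 2 < 0 := by
          nlinarith
        nlinarith [mul_pos hs0 hrp]
      nlinarith
    have h3 := intervalIntegral.intervalIntegral_pos_of_pos_on hInt.neg hpos hr₀
    have h4 : (0:ℝ) < -∫ v in (1:ℝ)..(Real.sinh ρ / Real.sinh a), sing q v * psi3 v a := by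
      rw [← intervalIntegral.integral_neg]; exact h3
    linarith
  -- boundary algebra
  have hw : ((Real.sinh ρ / Real.sinh a) ^ (2*q) - 1) ^ (-(1:ℝ)/2 - 1)
      = ((Real.sinh ρ / Real.sinh a) ^ (2*q) - 1) ^ (-(1:ℝ)/2)
        / ((Real.sinh ρ / Real.sinh a) ^ (2*q) - 1) := by
    rw [show (-(1:ℝ)/2 - 1) = (-(1:ℝ)/2) - 1 by norm_num, Real.rpow_sub hD0, Real.rpow_one]
  have hr2q1 : (Real.sinh ρ / Real.sinh a) ^ (2*q - 1)
      = (Real.sinh ρ / Real.sinh a) ^ (2*q) / (Real.sinh ρ / Real.sinh a) := by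
    rw [Real.rpow_sub hr₀0, Real.rpow_one]
  have hsc : Real.sinh a * Real.sinh a - Real.cosh a * Real.cosh a = -1 := by nlinarith
  have hpsi2_eq : psi2 (Real.sinh ρ / Real.sinh a) a = Real.cosh a / Real.cosh ρ ^ 3 := by
    unfold psi2
    rw [hBval a hsa2, hCpow3, ← div_eq_mul_inv]
  have hbr : 1 < q * (Real.sinh ρ / Real.sinh a) ^ (2*q) * Real.cosh a ^ 2
        / ((Real.sinh ρ / Real.sinh a) ^ (2*q) - 1) + Real.cosh a ^ 2 / Real.cosh ρ ^ 2 := by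
    rw [div_add_div _ _ (ne_of_gt hD0) (ne_of_gt (pow_pos hC0 2)),
      lt_div_iff₀ (mul_pos hD0 (pow_pos hC0 2))]
    nlinarith [mul_nonneg (sub_nonneg.2 hc2)
        (by positivity : (0:ℝ) ≤ q * ((Real.sinh ρ / Real.sinh a) ^ (2*q)) * Real.cosh ρ ^ 2
          + ((Real.sinh ρ / Real.sinh a) ^ (2*q) - 1)),
      mul_nonneg (sub_nonneg.2 hT2q) hD0.le,
      (by positivity : (0:ℝ) < q * Real.cosh ρ ^ 2)]
  have hAneg : Real.sinh ρ * ((Real.sinh ρ / Real.sinh a) ^ (2*q) - 1) ^ (-(1:ℝ)/2)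
      / (Real.cosh ρ * Real.sinh a ^ 2)
      * (1 - (q * (Real.sinh ρ / Real.sinh a) ^ (2*q) * Real.cosh a ^ 2
          / ((Real.sinh ρ / Real.sinh a) ^ (2*q) - 1) + Real.cosh a ^ 2 / Real.cosh ρ ^ 2)) < 0 := by
    apply mul_neg_of_pos_of_neg
    · exact div_pos (mul_pos hS0 hd0) (mul_pos hC0 (pow_pos hs0 2))
    · linarith
  have hEbd : -(Real.sinh ρ / Real.cosh ρ *
        ((Real.sinh a * Real.sinh a - Real.cosh a * Real.cosh a) / Real.sinh a ^ 2 *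
            ((Real.sinh ρ / Real.sinh a) ^ (2 * q) - 1) ^ (-(1:ℝ)/2) +
          Real.cosh a / Real.sinh a *
            (Real.sinh ρ * (-Real.cosh a / Real.sinh a ^ 2) * (2 * q) *
                (Real.sinh ρ / Real.sinh a) ^ (2 * q - 1) * (-(1:ℝ)/2) *
              ((Real.sinh ρ / Real.sinh a) ^ (2 * q) - 1) ^ (-(1:ℝ)/2 - 1))))
      + sing q (Real.sinh ρ / Real.sinh a) * psi2 (Real.sinh ρ / Real.sinh a) a *
          (Real.sinh ρ * (-Real.cosh a / Real.sinh a ^ 2))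
      = Real.sinh ρ * ((Real.sinh ρ / Real.sinh a) ^ (2*q) - 1) ^ (-(1:ℝ)/2)
          / (Real.cosh ρ * Real.sinh a ^ 2)
        * (1 - (q * (Real.sinh ρ / Real.sinh a) ^ (2*q) * Real.cosh a ^ 2
            / ((Real.sinh ρ / Real.sinh a) ^ (2*q) - 1) + Real.cosh a ^ 2 / Real.cosh ρ ^ 2)) := by
    rw [hpsi2_eq, hw, hr2q1, hsc]
    simp only [sing]
    field_simp
    ring
  linarith [hEbd, hAneg, hIval]
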